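/- For all π ∈ [0,1], (1-π)/(4 - 3.627π) + h₂(1/(6·(4 - 3.627π))) < 1, where h₂(x) = -x·log₂(x) - (1-x)·log₂(1-x) is the binary entropy function. -/

import Mathlib

/-!
Binary entropy is concave, so it lies below each of its tangent lines; at the point `q` the
tangent is `x ↦ -x log₂ q - (1 - x) log₂ (1 - q)` (Gibbs' inequality). Taking `q = 0.3947` and
rounding both logarithms up to rationals gives an affine upper bound for `h₂`. Substituting
`x = 1 / (6t)` with `t = 4 - 3.627π` and clearing the denominator `6t` turns the claim into a
linear inequality in `π`, which it suffices to check at `π = 0` and `π = 1`.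
-/

noncomputable def h2 (x : ℝ) : ℝ := -x * Real.logb 2 x - (1 - x) * Real.logb 2 (1 - x)

section

open Real

lemma mul_log_sub_mul_log_le {x q : ℝ} (hx : 0 ≤ x) (hq : 0 < q) :
    x * log q - x * log x ≤ q - x := by
  rcases hx.eq_or_lt with rfl | hx
  · simpa using hq.le
  have h := mul_le_mul_of_nonneg_left (log_le_sub_one_of_pos (div_pos hq hx)) hx.le
  rwa [log_div hq.ne' hx.ne', mul_sub, mul_sub, mul_div_cancel₀ _ hx.ne', mul_one] at h

lemma h2_le_cross_entropy {x q : ℝ} (hx₀ : 0 ≤ x) (hx₁ : x ≤ 1) (hq₀ : 0 < q) (hq₁ : q < 1) :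
    h2 x ≤ -x * logb 2 q - (1 - x) * logb 2 (1 - q) := by
  have h₁ := mul_log_sub_mul_log_le hx₀ hq₀
  have h₂ := mul_log_sub_mul_log_le (sub_nonneg.2 hx₁) (sub_pos.2 hq₁)
  simp only [h2, logb, mul_div_assoc']
  rw [← sub_div, ← sub_div]
  exact div_le_div_of_nonneg_right (by linarith) (log_pos one_lt_two).le

lemma logb_lt_div_of_pow_lt {b y : ℝ} {p n : ℕ} (hb : 1 < b) (hn : 0 < n) (hy : 0 < y)
    (h : y ^ n < b ^ p) : logb b y < p / n := by
  have h' := logb_lt_logb hb (pow_pos hy n) h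
  rw [logb_pow, logb_pow, logb_self_eq_one hb, mul_one] at h'
  rwa [lt_div_iff₀ (by positivity), mul_comm]

/- The cross entropy at `q = 0.3947`, with `-log₂ q ≈ 1.3411716` and `-log₂ (1 - q) ≈ 0.7242777`
rounded up. This `q` leaves a slack of a few `10⁻⁴` at both ends `π = 0` and `π = 1` of the
final inequality. -/
lemma h2_le_affine {x : ℝ} (hx₀ : 0 ≤ x) (hx₁ : x ≤ 1) :
    h2 x ≤ 114 / 85 * x + 176 / 243 * (1 - x) := by
  have hq : -logb 2 (3947 / 10000) < 114 / 85 := by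
    rw [← logb_inv]
    exact_mod_cast logb_lt_div_of_pow_lt one_lt_two (by norm_num) (by norm_num) (by norm_num)
  have hq' : -logb 2 (1 - 3947 / 10000) < 176 / 243 := by
    rw [← logb_inv]
    exact_mod_cast logb_lt_div_of_pow_lt one_lt_two (by norm_num) (by norm_num) (by norm_num)
  have hce := h2_le_cross_entropy hx₀ hx₁ (q := 3947 / 10000) (by norm_num) (by norm_num)
  nlinarith [sub_nonneg.2 hx₁]

end

/-- For all `π ∈ [0,1]`, `(1-π)/(4 - 3.627π) + h₂(1/(6·(4 - 3.627π))) < 1`.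
This verifies the hypothesis of the moderate-deviations lemma with parameters
`(μ', β') = (4, 1/24)` and `μ = 3.627`. -/
theorem moderate_deviation_constants : ∀ π : ℝ, π ∈ Set.Icc (0 : ℝ) 1 →
    (1 - π) / (4 - 3.627 * π) + h2 (1 / (6 * (4 - 3.627 * π))) < 1 := by
  rintro π ⟨hπ₀, hπ₁⟩
  set t := 4 - 3.627 * π with ht
  have ht₀ : 0.373 ≤ t := by linarith
  have hx₁ : 1 / (6 * t) ≤ 1 := by rw [div_le_one (by positivity)]; linarith
  have hh2 := h2_le_affine (by positivity) hx₁
  have haffine : (1 - π) / t + (114 / 85 * (1 / (6 * t)) + 176 / 243 * (1 - 1 / (6 * t))) < 1 := by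
    rw [← sub_pos]
    field_simp
    linarith
  linarith
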